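/- arXiv:1001.0018 — 5 statements merged into one kernel-verified Lean document; each statement's English description precedes it below -/
import Mathlib

section
/- Let n ≥ 1, k ≥ 1, and let f : {0,1}^n → {0,1} be a total Boolean function that depends on all n variables (i.e., for every index j ∈ [n] there exists x ∈ {0,1}^n with f(x) ≠ f(x ⊕ e^j)). Let 0 ≤ ε ≤ 1/2. Suppose there exist a unit vector ψ ∈ ℂ^{(n+1)^k} and a positive semidefinite matrix M on ℂ^{(n+1)^k} with M ≤ I such that ⟨ψ| O_x^{⊗k} M O_x^{⊗k} |ψ⟩ ≥ 1−ε for every x with f(x)=0 and ⟨ψ| O_x^{⊗k} M O_x^{⊗k} |ψ⟩ ≤ ε for every x with f(x)=1. Then k ≥ (n/2)·(1 − 2√(ε(1−ε))). -/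
open Matrix
open scoped ComplexOrder

/-- Extend an `n`-bit string `x` to indices `0,…,n` with `x₀ := 0` (false). -/
noncomputable def extendBit {n : ℕ} (x : Fin n → Bool) : Fin (n + 1) → Bool :=
  Fin.cases false x

/-- The `k`-fold tensor power `O_x^{⊗k}` of the phase oracle of `x`:
the diagonal matrix on `ℂ^{(n+1)^k}` acting as
`O_x^{⊗k}|i₁,…,i_k⟩ = (−1)^{x_{i₁}+⋯+x_{i_k}}|i₁,…,i_k⟩`. -/
noncomputable def oracleK (n k : ℕ) (x : Fin n → Bool) :
    Matrix (Fin k → Fin (n + 1)) (Fin k → Fin (n + 1)) ℂ :=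
  Matrix.diagonal fun i => ∏ m, if extendBit x (i m) then (-1 : ℂ) else 1

/-! Each variable `j` is sensitive somewhere, at a pair `z`, `z ⊕ eʲ` that the measurement
distinguishes with error at most `ε`; hence the two states `O_z ψ` and `O_{z⊕eʲ} ψ` have
overlap at most `2√(ε(1-ε))`. The two oracles differ by the sign `(-1)^c` on a basis state
`|i⟩` querying `j` exactly `c` times, so `1 - overlap ≤ 2 Σᵢ c |ψᵢ|²`, twice the query
magnitude of `j`. Summing over `j`, the query magnitudes add up to at most `k`. -/

lemma Matrix.PosSemidef.norm_dotProduct_mulVec_le {ι : Type*} [Fintype ι] {M : Matrix ι ι ℂ}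
    (hM : M.PosSemidef) (u v : ι → ℂ) :
    ‖star u ⬝ᵥ (M *ᵥ v)‖ ≤
      √(star u ⬝ᵥ (M *ᵥ u)).re * √(star v ⬝ᵥ (M *ᵥ v)).re := by
  let _ := M.toSeminormedAddCommGroup hM
  let _ := M.toInnerProductSpace hM
  have h := norm_inner_le_norm (𝕜 := ℂ) u v
  rw [norm_eq_sqrt_re_inner (𝕜 := ℂ) u, norm_eq_sqrt_re_inner (𝕜 := ℂ) v] at h
  rw [dotProduct_comm (star u), dotProduct_comm (star u), dotProduct_comm (star v)]
  exact h

lemma sqrt_mul_sqrt_add_sqrt_mul_sqrt_le {p q ε : ℝ} (hε : ε ≤ 1 / 2)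
    (hp : 1 - ε ≤ p) (hp1 : p ≤ 1) (hq0 : 0 ≤ q) (hq : q ≤ ε) :
    √p * √q + √(1 - p) * √(1 - q) ≤ 2 * √(ε * (1 - ε)) := by
  have hε0 : 0 ≤ ε := hq0.trans hq
  set s := √ε
  set t := √(1 - ε)
  have hs : s ^ 2 = ε := Real.sq_sqrt hε0
  have ht : t ^ 2 = 1 - ε := Real.sq_sqrt (by linarith)
  -- With `a, b, c, d := √p, √q, √(1 - p), √(1 - q)`:
  -- `(ab + cd)² + (ad - bc)² = (a² + c²)(b² + d²) = 1` and `ad - bc ≥ t² - s² ≥ 0`.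
  have hsum :
      (√p * √q + √(1 - p) * √(1 - q)) ^ 2 + (√p * √(1 - q) - √q * √(1 - p)) ^ 2 = 1 := by
    have hsq : ∀ x, 0 ≤ x → √x ^ 2 = x := fun x hx => Real.sq_sqrt hx
    nlinarith [hsq p (by linarith), hsq q hq0, hsq (1 - p) (by linarith),
      hsq (1 - q) (by linarith)]
  have had : t * t ≤ √p * √(1 - q) :=
    mul_le_mul (Real.sqrt_le_sqrt hp) (Real.sqrt_le_sqrt (by linarith)) (Real.sqrt_nonneg _)
      (Real.sqrt_nonneg _)
  have hbc : √q * √(1 - p) ≤ s * s :=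
    mul_le_mul (Real.sqrt_le_sqrt hq) (Real.sqrt_le_sqrt (by linarith)) (Real.sqrt_nonneg _)
      (Real.sqrt_nonneg _)
  have hsq : (√p * √q + √(1 - p) * √(1 - q)) ^ 2 ≤ (2 * (s * t)) ^ 2 := by nlinarith
  rw [Real.sqrt_mul hε0]
  exact (abs_le_of_sq_le_sq' hsq (by positivity)).2

lemma re_dotProduct_le_of_accept_reject {ι : Type*} [Fintype ι] [DecidableEq ι]
    {M : Matrix ι ι ℂ} (hM : M.PosSemidef) (hMI : (1 - M).PosSemidef) {u v : ι → ℂ}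
    (hu : star u ⬝ᵥ u = 1) (hv : star v ⬝ᵥ v = 1) {ε : ℝ} (hε : ε ≤ 1 / 2)
    (hacc : 1 - ε ≤ (star u ⬝ᵥ (M *ᵥ u)).re) (hrej : (star v ⬝ᵥ (M *ᵥ v)).re ≤ ε) :
    (star u ⬝ᵥ v).re ≤ 2 * √(ε * (1 - ε)) := by
  have hcompl : ∀ w y : ι → ℂ, star w ⬝ᵥ ((1 - M) *ᵥ y) = star w ⬝ᵥ y - star w ⬝ᵥ (M *ᵥ y) :=
    fun w y => by rw [sub_mulVec, one_mulVec, dotProduct_sub]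
  have hMI_u := hMI.re_dotProduct_nonneg u
  have hMI_v := hMI.re_dotProduct_nonneg v
  have hCS := hM.norm_dotProduct_mulVec_le u v
  have hCS' := hMI.norm_dotProduct_mulVec_le u v
  simp only [hcompl, hu, hv, RCLike.re_to_complex, Complex.sub_re, Complex.one_re]
    at hMI_u hMI_v hCS'
  calc (star u ⬝ᵥ v).re
      = (star u ⬝ᵥ (M *ᵥ v)).re + (star u ⬝ᵥ ((1 - M) *ᵥ v)).re := by
        rw [hcompl, Complex.sub_re]; ring
    _ ≤ ‖star u ⬝ᵥ (M *ᵥ v)‖ + ‖star u ⬝ᵥ ((1 - M) *ᵥ v)‖ :=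
        add_le_add (Complex.re_le_norm _) (Complex.re_le_norm _)
    _ ≤ 2 * √(ε * (1 - ε)) := by
        rw [hcompl]
        refine (add_le_add hCS hCS').trans
          (sqrt_mul_sqrt_add_sqrt_mul_sqrt_le hε hacc ?_ ?_ hrej)
        · linarith
        · simpa using hM.re_dotProduct_nonneg v

lemma star_mulVec_dotProduct_mulVec {ι R : Type*} [Fintype ι] [CommRing R] [StarRing R]
    (A B : Matrix ι ι R) (u v : ι → R) :
    star (A *ᵥ u) ⬝ᵥ (B *ᵥ v) = star u ⬝ᵥ ((Aᴴ * B) *ᵥ v) := by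
  rw [star_mulVec, ← dotProduct_mulVec, mulVec_mulVec]

lemma star_dotProduct_diagonal_ofReal_mulVec {ι : Type*} [Fintype ι] [DecidableEq ι]
    (d : ι → ℝ) (ψ : ι → ℂ) :
    star ψ ⬝ᵥ (diagonal (fun i => (d i : ℂ)) *ᵥ ψ) = ((∑ i, d i * ‖ψ i‖ ^ 2 : ℝ) : ℂ) := by
  simp only [dotProduct, mulVec_diagonal, Pi.star_apply, RCLike.star_def]
  push_cast
  refine Finset.sum_congr rfl fun i _ => ?_
  rw [mul_left_comm, Complex.conj_mul']

lemma extendBit_update_not_eq_iff {n : ℕ} (x : Fin n → Bool) (j : Fin n) (a : Fin (n + 1)) :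
    extendBit x a = extendBit (Function.update x j (!x j)) a ↔ a ≠ j.succ := by
  cases a using Fin.cases with
  | zero => simp [extendBit, (Fin.succ_ne_zero j).symm]
  | succ l =>
    by_cases h : l = j
    · subst h; simp [extendBit]
    · simp [extendBit, h]

lemma oracleK_conjTranspose {n k : ℕ} (x : Fin n → Bool) :
    (oracleK n k x)ᴴ = oracleK n k x := by
  rw [oracleK, diagonal_conjTranspose]
  congr 1; ext i
  rw [Pi.star_apply, star_prod]
  congr 1; ext m
  split <;> simp

lemma oracleK_mul_oracleK {n k : ℕ} (x y : Fin n → Bool) :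
    oracleK n k x * oracleK n k y = diagonal fun i =>
      ((∏ m, if extendBit x (i m) = extendBit y (i m) then 1 else -1 : ℝ) : ℂ) := by
  rw [oracleK, oracleK, diagonal_mul_diagonal]
  congr 1; ext i
  rw [← Finset.prod_mul_distrib]; push_cast
  congr 1; ext m
  cases extendBit x (i m) <;> cases extendBit y (i m) <;> simp

lemma star_oracleK_mulVec_dotProduct_oracleK_mulVec {n k : ℕ} (x y : Fin n → Bool)
    (ψ : (Fin k → Fin (n + 1)) → ℂ) :
    star (oracleK n k x *ᵥ ψ) ⬝ᵥ (oracleK n k y *ᵥ ψ) = ((∑ i,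
      (∏ m, if extendBit x (i m) = extendBit y (i m) then 1 else -1 : ℝ) * ‖ψ i‖ ^ 2 : ℝ) :
        ℂ) := by
  rw [star_mulVec_dotProduct_mulVec, oracleK_conjTranspose, oracleK_mul_oracleK,
    star_dotProduct_diagonal_ofReal_mulVec]

lemma star_oracleK_mulVec_dotProduct_self {n k : ℕ} (x : Fin n → Bool)
    {ψ : (Fin k → Fin (n + 1)) → ℂ} (hψ : ∑ i, ‖ψ i‖ ^ 2 = 1) :
    star (oracleK n k x *ᵥ ψ) ⬝ᵥ (oracleK n k x *ᵥ ψ) = 1 := by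
  simp [star_oracleK_mulVec_dotProduct_oracleK_mulVec, hψ]

lemma star_dotProduct_oracleK_mul_mul_oracleK_mulVec {n k : ℕ} (x : Fin n → Bool)
    (M : Matrix (Fin k → Fin (n + 1)) (Fin k → Fin (n + 1)) ℂ)
    (ψ : (Fin k → Fin (n + 1)) → ℂ) :
    star ψ ⬝ᵥ ((oracleK n k x * M * oracleK n k x) *ᵥ ψ) =
      star (oracleK n k x *ᵥ ψ) ⬝ᵥ (M *ᵥ (oracleK n k x *ᵥ ψ)) := by
  rw [mulVec_mulVec, star_mulVec_dotProduct_mulVec, oracleK_conjTranspose, Matrix.mul_assoc]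

open Finset in
def queryCount {n k : ℕ} (i : Fin k → Fin (n + 1)) (j : Fin n) : ℕ := #{m | i m = j.succ}

noncomputable def queryMagnitude {n k : ℕ} (ψ : (Fin k → Fin (n + 1)) → ℂ) (j : Fin n) : ℝ :=
  ∑ i, queryCount i j * ‖ψ i‖ ^ 2

lemma re_star_oracleK_mulVec_dotProduct_oracleK_update_mulVec {n k : ℕ} (x : Fin n → Bool)
    (j : Fin n) (ψ : (Fin k → Fin (n + 1)) → ℂ) :
    (star (oracleK n k x *ᵥ ψ) ⬝ᵥ (oracleK n k (Function.update x j (!x j)) *ᵥ ψ)).re =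
      ∑ i, (-1) ^ queryCount i j * ‖ψ i‖ ^ 2 := by
  rw [star_oracleK_mulVec_dotProduct_oracleK_mulVec, Complex.ofReal_re]
  refine Finset.sum_congr rfl fun i _ => ?_
  simp_rw [extendBit_update_not_eq_iff, ite_not]
  rw [Finset.prod_ite, Finset.prod_const_one, mul_one, Finset.prod_const, queryCount]

lemma one_sub_neg_one_pow_le (c : ℕ) : 1 - (-1 : ℝ) ^ c ≤ 2 * c := by
  rcases c.even_or_odd with hc | hc
  · rw [hc.neg_one_pow, sub_self]; positivity
  · rw [hc.neg_one_pow]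
    have : (1 : ℝ) ≤ c := by exact_mod_cast hc.pos
    linarith

lemma one_sub_sum_neg_one_pow_queryCount_le {n k : ℕ} {ψ : (Fin k → Fin (n + 1)) → ℂ}
    (hψ : ∑ i, ‖ψ i‖ ^ 2 = 1) (j : Fin n) :
    1 - ∑ i, (-1) ^ queryCount i j * ‖ψ i‖ ^ 2 ≤ 2 * queryMagnitude ψ j := by
  calc 1 - ∑ i, (-1) ^ queryCount i j * ‖ψ i‖ ^ 2
      = ∑ i, (1 - (-1) ^ queryCount i j) * ‖ψ i‖ ^ 2 := by
        simp only [sub_mul, one_mul, Finset.sum_sub_distrib, hψ]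
    _ ≤ ∑ i, 2 * queryCount i j * ‖ψ i‖ ^ 2 := by
        gcongr with i; exact one_sub_neg_one_pow_le _
    _ = 2 * queryMagnitude ψ j := by simp only [queryMagnitude, Finset.mul_sum, mul_assoc]

lemma sum_queryCount_le {n k : ℕ} (i : Fin k → Fin (n + 1)) : ∑ j, queryCount i j ≤ k := by
  have h := Finset.card_eq_sum_card_fiberwise (f := i) (s := Finset.univ) (t := Finset.univ)
    (by simp)
  rw [Fin.sum_univ_succ, Finset.card_univ, Fintype.card_fin] at h
  simp only [queryCount]
  omega

lemma sum_queryMagnitude_le {n k : ℕ} {ψ : (Fin k → Fin (n + 1)) → ℂ}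
    (hψ : ∑ i, ‖ψ i‖ ^ 2 = 1) : ∑ j, queryMagnitude ψ j ≤ k := by
  calc ∑ j, queryMagnitude ψ j = ∑ i, (∑ j, queryCount i j : ℕ) * ‖ψ i‖ ^ 2 := by
        simp only [queryMagnitude, Nat.cast_sum, Finset.sum_mul]; exact Finset.sum_comm
    _ ≤ ∑ i, (k : ℝ) * ‖ψ i‖ ^ 2 := by
        gcongr with i; exact_mod_cast sum_queryCount_le i
    _ = k := by rw [← Finset.mul_sum, hψ, mul_one]

lemma exists_eq_false_update_eq_true {n : ℕ} {f : (Fin n → Bool) → Bool} {j : Fin n}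
    (hj : ∃ x, f x ≠ f (Function.update x j (!x j))) :
    ∃ z, f z = false ∧ f (Function.update z j (!z j)) = true := by
  obtain ⟨x, h⟩ := hj
  cases hx : f x
  · exact ⟨x, hx, by simpa [hx] using h.symm⟩
  · refine ⟨Function.update x j (!x j), by simpa [hx] using h.symm, ?_⟩
    simpa [Function.update_idem] using hx

theorem nonadaptive_quantum_computation_lower_bound_general
    (n k : ℕ)
    (f : (Fin n → Bool) → Bool)
    (hdep : ∀ j : Fin n, ∃ x : Fin n → Bool, f x ≠ f (Function.update x j (!x j)))
    (ε : ℝ) (hε1 : ε ≤ 1 / 2)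
    (ψ : (Fin k → Fin (n + 1)) → ℂ) (hψ : ∑ i, ‖ψ i‖ ^ 2 = 1)
    (M : Matrix (Fin k → Fin (n + 1)) (Fin k → Fin (n + 1)) ℂ)
    (hM : M.PosSemidef) (hMI : (1 - M).PosSemidef)
    (h0 : ∀ x, f x = false →
      ((1 - ε : ℝ) : ℂ) ≤ star ψ ⬝ᵥ ((oracleK n k x * M * oracleK n k x) *ᵥ ψ))
    (h1 : ∀ x, f x = true →
      star ψ ⬝ᵥ ((oracleK n k x * M * oracleK n k x) *ᵥ ψ) ≤ ((ε : ℝ) : ℂ)) :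
    (n : ℝ) / 2 * (1 - 2 * Real.sqrt (ε * (1 - ε))) ≤ k := by
  have hsensitive : ∀ j, 1 - 2 * √(ε * (1 - ε)) ≤ 2 * queryMagnitude ψ j := by
    intro j
    obtain ⟨z, hz0, hz1⟩ := exists_eq_false_update_eq_true (hdep j)
    have hacc := (Complex.le_def.1 (h0 z hz0)).1
    have hrej := (Complex.le_def.1 (h1 _ hz1)).1
    rw [star_dotProduct_oracleK_mul_mul_oracleK_mulVec, Complex.ofReal_re] at hacc hrej
    have hoverlap := re_dotProduct_le_of_accept_reject hM hMI
      (star_oracleK_mulVec_dotProduct_self z hψ) (star_oracleK_mulVec_dotProduct_self _ hψ) hε1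
      hacc hrej
    rw [re_star_oracleK_mulVec_dotProduct_oracleK_update_mulVec] at hoverlap
    linarith [one_sub_sum_neg_one_pow_queryCount_le hψ j]
  calc (n : ℝ) / 2 * (1 - 2 * √(ε * (1 - ε)))
      = ∑ _j : Fin n, (1 - 2 * √(ε * (1 - ε))) / 2 := by
        rw [Finset.sum_const, Finset.card_univ, Fintype.card_fin, nsmul_eq_mul]; ring
    _ ≤ ∑ j, queryMagnitude ψ j := Finset.sum_le_sum fun j _ => by linarith [hsensitive j]
    _ ≤ k := sum_queryMagnitude_le hψ

/-- Any nonadaptive quantum query algorithm `(ψ, M)` making `k` queries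
that computes a total boolean function `f` depending on all `n` variables with failure
probability at most `ε ≤ 1/2` satisfies `k ≥ (n/2)(1 − 2√(ε(1−ε)))`. -/
theorem nonadaptive_quantum_computation_lower_bound
    (n k : ℕ) (hn : 1 ≤ n) (hk : 1 ≤ k)
    (f : (Fin n → Bool) → Bool)
    (hdep : ∀ j : Fin n, ∃ x : Fin n → Bool, f x ≠ f (Function.update x j (!x j)))
    (ε : ℝ) (hε0 : 0 ≤ ε) (hε1 : ε ≤ 1 / 2)
    (ψ : (Fin k → Fin (n + 1)) → ℂ) (hψ : ∑ i, ‖ψ i‖ ^ 2 = 1)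
    (M : Matrix (Fin k → Fin (n + 1)) (Fin k → Fin (n + 1)) ℂ)
    (hM : M.PosSemidef) (hMI : (1 - M).PosSemidef)
    (h0 : ∀ x, f x = false →
      ((1 - ε : ℝ) : ℂ) ≤ star ψ ⬝ᵥ ((oracleK n k x * M * oracleK n k x) *ᵥ ψ))
    (h1 : ∀ x, f x = true →
      star ψ ⬝ᵥ ((oracleK n k x * M * oracleK n k x) *ᵥ ψ) ≤ ((ε : ℝ) : ℂ)) :
    (n : ℝ) / 2 * (1 - 2 * Real.sqrt (ε * (1 - ε))) ≤ k :=
  nonadaptive_quantum_computation_lower_bound_general n k f hdep ε hε1 ψ hψ M hM hMI h0 h1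
end

section
/- Let H be a finite-dimensional complex inner product space, let M be a positive semidefinite operator on H with M ≤ I, let 0 ≤ ε ≤ 1/2, and let ψ₁, ψ₂ ∈ H be unit vectors such that ⟨ψ₁| M |ψ₁⟩ ≤ ε and ⟨ψ₂| M |ψ₂⟩ ≥ 1−ε. Then |⟨ψ₁|ψ₂⟩|² ≤ 4ε(1−ε). -/
open scoped ComplexOrder

/-!
Split `ψ₂ = M ψ₂ + (1 - M) ψ₂`. Cauchy–Schwarz for the positive semi-inner products
`⟪·, M ·⟫` and `⟪·, (1 - M) ·⟫` bounds the two resulting overlaps `s`, `t` by `s² ≤ ab` and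
`t² ≤ (1 - a)(1 - b)`, where `a = ⟪ψ₁, M ψ₁⟫ ≤ ε` and `b = ⟪ψ₂, M ψ₂⟫ ≥ 1 - ε`. Since `x(1 - x)`
increases on `(-∞, 1/2]`, both `a(1 - a)` and `b(1 - b)` are at most `ε(1 - ε)`, so
`st ≤ ε(1 - ε)`; together with `ab + (1 - a)(1 - b) ≤ 2ε(1 - ε)` this gives `(s + t)² ≤ 4ε(1 - ε)`.
-/

namespace ContinuousLinearMap

variable {𝕜 E : Type*} [RCLike 𝕜] [NormedAddCommGroup E] [InnerProductSpace 𝕜 E]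

open RCLike in
theorem IsPositive.norm_inner_apply_sq_le {T : E →L[𝕜] E} (hT : T.IsPositive) (x y : E) :
    ‖inner 𝕜 x (T y)‖ ^ 2 ≤ re (inner 𝕜 x (T x)) * re (inner 𝕜 y (T y)) := by
  let C : PreInnerProductSpace.Core 𝕜 E :=
    { inner := fun u v => inner 𝕜 u (T v)
      conj_inner_symm := fun u v => by
        simp only [← hT.inner_left_eq_inner_right, inner_conj_symm]
      re_inner_nonneg := hT.re_inner_nonneg_right
      add_left := fun u v w => inner_add_left u v (T w)
      smul_left := fun u v r => inner_smul_left u (T v) r }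
  have hsymm : ‖inner 𝕜 y (T x)‖ = ‖inner 𝕜 x (T y)‖ := by
    rw [← hT.inner_left_eq_inner_right, norm_inner_symm]
  have hC : ‖inner 𝕜 x (T y)‖ * ‖inner 𝕜 y (T x)‖
      ≤ re (inner 𝕜 x (T x)) * re (inner 𝕜 y (T y)) :=
    @InnerProductSpace.Core.inner_mul_inner_self_le 𝕜 E _ _ _ C x y
  rwa [hsymm, ← sq] at hC

theorem re_inner_one_sub_apply_self (T : E →L[𝕜] E) (x : E) :
    RCLike.re (inner 𝕜 x ((1 - T) x)) = ‖x‖ ^ 2 - RCLike.re (inner 𝕜 x (T x)) := by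
  simp [inner_sub_right]

end ContinuousLinearMap

theorem mul_one_sub_le_mul_one_sub {a ε : ℝ} (ha : a ≤ ε) (hε : ε ≤ 1 / 2) :
    a * (1 - a) ≤ ε * (1 - ε) := by
  nlinarith

theorem add_sq_le_four_mul_one_sub {s t a b ε : ℝ} (hs : 0 ≤ s) (ht : 0 ≤ t)
    (ha : a ≤ ε) (hε : ε ≤ 1 / 2) (hb : 1 - ε ≤ b)
    (hsab : s ^ 2 ≤ a * b) (htab : t ^ 2 ≤ (1 - a) * (1 - b)) :
    (s + t) ^ 2 ≤ 4 * ε * (1 - ε) := by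
  have ha0 : 0 ≤ a := by nlinarith
  have hb1 : b ≤ 1 := by nlinarith
  have hε0 : 0 ≤ ε := ha0.trans ha
  have hst : s * t ≤ ε * (1 - ε) := by
    refine (sq_le_sq₀ (by positivity) (by nlinarith)).mp ?_
    calc (s * t) ^ 2 = s ^ 2 * t ^ 2 := by ring
      _ ≤ (a * b) * ((1 - a) * (1 - b)) :=
        mul_le_mul hsab htab (sq_nonneg t) (mul_nonneg ha0 (by linarith))
      _ = (a * (1 - a)) * ((1 - b) * (1 - (1 - b))) := by ring
      _ ≤ (ε * (1 - ε)) * (ε * (1 - ε)) :=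
        mul_le_mul (mul_one_sub_le_mul_one_sub ha hε)
          (mul_one_sub_le_mul_one_sub (by linarith) hε)
          (mul_nonneg (by linarith) (by linarith)) (mul_nonneg hε0 (by linarith))
      _ = (ε * (1 - ε)) ^ 2 := by ring
  have hdiag : a * b + (1 - a) * (1 - b) ≤ 2 * (ε * (1 - ε)) := by
    nlinarith [mul_nonneg (sub_nonneg.2 ha) (by linarith : (0 : ℝ) ≤ 2 * b - 1),
      mul_nonneg (sub_nonneg.2 hb) (by linarith : (0 : ℝ) ≤ 1 - 2 * ε)]
  calc (s + t) ^ 2 = s ^ 2 + t ^ 2 + 2 * (s * t) := by ring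
    _ ≤ a * b + (1 - a) * (1 - b) + 2 * (ε * (1 - ε)) := by linarith
    _ ≤ 4 * ε * (1 - ε) := by linarith

theorem bernstein_vazirani_distinguish_general
    {H : Type*} [NormedAddCommGroup H] [InnerProductSpace ℂ H]
    (M : H →L[ℂ] H) (hM : M.IsPositive) (hMI : (1 - M).IsPositive)
    (ε : ℝ) (hε1 : ε ≤ 1 / 2)
    (ψ₁ ψ₂ : H) (hψ₁ : ‖ψ₁‖ = 1) (hψ₂ : ‖ψ₂‖ = 1)
    (h1 : (inner ℂ ψ₁ (M ψ₁) : ℂ) ≤ ((ε : ℝ) : ℂ))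
    (h2 : ((1 - ε : ℝ) : ℂ) ≤ (inner ℂ ψ₂ (M ψ₂) : ℂ)) :
    ‖(inner ℂ ψ₁ ψ₂ : ℂ)‖ ^ 2 ≤ 4 * ε * (1 - ε) := by
  have hsplit : ‖(inner ℂ ψ₁ ψ₂ : ℂ)‖ ≤ ‖inner ℂ ψ₁ (M ψ₂)‖ + ‖inner ℂ ψ₁ ((1 - M) ψ₂)‖ := by
    calc ‖(inner ℂ ψ₁ ψ₂ : ℂ)‖ = ‖inner ℂ ψ₁ (M ψ₂) + inner ℂ ψ₁ ((1 - M) ψ₂)‖ := by simp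
      _ ≤ _ := norm_add_le _ _
  have hcs₁ := hM.norm_inner_apply_sq_le ψ₁ ψ₂
  have hcs₂ := hMI.norm_inner_apply_sq_le ψ₁ ψ₂
  simp only [M.re_inner_one_sub_apply_self, hψ₁, hψ₂, one_pow, RCLike.re_to_complex] at hcs₁ hcs₂
  calc ‖(inner ℂ ψ₁ ψ₂ : ℂ)‖ ^ 2
      ≤ (‖inner ℂ ψ₁ (M ψ₂)‖ + ‖inner ℂ ψ₁ ((1 - M) ψ₂)‖) ^ 2 := by gcongr
    _ ≤ 4 * ε * (1 - ε) :=
      add_sq_le_four_mul_one_sub (norm_nonneg _) (norm_nonneg _)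
        (by simpa using Complex.re_le_re h1) hε1 (by simpa using Complex.re_le_re h2) hcs₁ hcs₂

/-- Bernstein–Vazirani distinguishing fact. If a positive semidefinite
operator `M ≤ I` on a finite-dimensional complex inner product space satisfies
`⟨ψ₁|M|ψ₁⟩ ≤ ε` and `⟨ψ₂|M|ψ₂⟩ ≥ 1 − ε` for unit vectors `ψ₁, ψ₂`, then
`|⟨ψ₁|ψ₂⟩|² ≤ 4ε(1−ε)`. -/
theorem bernstein_vazirani_distinguish
    {H : Type*} [NormedAddCommGroup H] [InnerProductSpace ℂ H] [FiniteDimensional ℂ H]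
    (M : H →L[ℂ] H) (hM : M.IsPositive) (hMI : (1 - M).IsPositive)
    (ε : ℝ) (hε0 : 0 ≤ ε) (hε1 : ε ≤ 1 / 2)
    (ψ₁ ψ₂ : H) (hψ₁ : ‖ψ₁‖ = 1) (hψ₂ : ‖ψ₂‖ = 1)
    (h1 : (inner ℂ ψ₁ (M ψ₁) : ℂ) ≤ ((ε : ℝ) : ℂ))
    (h2 : ((1 - ε : ℝ) : ℂ) ≤ (inner ℂ ψ₂ (M ψ₂) : ℂ)) :
    ‖(inner ℂ ψ₁ ψ₂ : ℂ)‖ ^ 2 ≤ 4 * ε * (1 - ε) :=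
  bernstein_vazirani_distinguish_general M hM hMI ε hε1 ψ₁ ψ₂ hψ₁ hψ₂ h1 h2
end

section
/- Let C ⊆ {0,1}^n be a concept class with |C| = m ≥ 2 and let 0 ≤ ε < 1/2. Suppose there exist a unit vector ψ ∈ ℂ^{n+1} and a family of positive semidefinite matrices (M_x)_{x ∈ C} on ℂ^{n+1} with Σ_{x∈C} M_x ≤ I, such that ⟨ψ| O_x M_x O_x |ψ⟩ ≥ 1−ε for every x ∈ C. Then there exists a set S ⊆ [n] with |S| ≤ 4·log₂(m) / (1 − 2√(ε(1−ε))) such that every pair of distinct concepts in C differs on at least one index in S. -/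
/-!
Write `u_x = O_x ψ`. For distinct concepts `x ≠ y`, the pair `{M_x, 1 - M_x}` is a binary
measurement that accepts `u_x` and rejects `u_y`, each with error at most `ε`. Splitting
`⟨u_x, u_y⟩` along it and applying Cauchy–Schwarz to both parts gives
`Re ⟨u_x, u_y⟩ ≤ 2√(ε(1-ε))`, while a direct computation gives `Re ⟨u_x, u_y⟩ = 1 - 2 w(Δ)`,
where `w j = |ψ_j|²` and `Δ` is the set of indices on which `x` and `y` differ. Hence
`w(Δ) ≥ c := (1 - 2√(ε(1-ε)))/2` for every pair: `w` is a fractional hitting set of total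
weight at most `1` for these sets. Greedily choosing the index that separates the most remaining
pairs removes a `c`-fraction of them at each step, so at most `1 + ln(m²)/c` indices separate all
pairs, and this is at most `4 log₂ m / (1 - 2√(ε(1-ε)))`.
-/

open Matrix
open scoped ComplexOrder

/-- The phase oracle `O_x` on `ℂ^{n+1}`: the diagonal matrix acting as
`O_x|i⟩ = (−1)^{x_i}|i⟩` for `1 ≤ i ≤ n` and `O_x|0⟩ = |0⟩`. -/
noncomputable def oracle1 (n : ℕ) (x : Fin n → Bool) :
    Matrix (Fin (n + 1)) (Fin (n + 1)) ℂ :=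
  Matrix.diagonal fun i => if extendBit x i then (-1 : ℂ) else 1

theorem sqrt_mul_one_sub_lt_half {ε : ℝ} (hε : ε ≠ 1 / 2) : √(ε * (1 - ε)) < 1 / 2 := by
  rw [Real.sqrt_lt' (by norm_num)]
  nlinarith [sq_pos_of_ne_zero (sub_ne_zero.2 hε)]

theorem sqrt_mul_add_sqrt_one_sub_mul_one_sub_le {ε a b : ℝ} (hε : ε ≤ 1 / 2)
    (ha : 1 - ε ≤ a) (ha1 : a ≤ 1) (hb : 0 ≤ b) (hbε : b ≤ ε) :
    √(a * b) + √((1 - a) * (1 - b)) ≤ 2 * √(ε * (1 - ε)) := by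
  rcases (hb.trans hbε).eq_or_lt with rfl | hε0
  · obtain rfl : b = 0 := by linarith
    obtain rfl : a = 1 := by linarith
    simp
  have ht2 : √ε ^ 2 = ε := Real.sq_sqrt hε0.le
  have hu2 : √(1 - ε) ^ 2 = 1 - ε := Real.sq_sqrt (by linarith)
  have htu : 0 < 2 * (√ε * √(1 - ε)) :=
    mul_pos two_pos (mul_pos (Real.sqrt_pos.2 hε0) (Real.sqrt_pos.2 (by linarith)))
  rw [Real.sqrt_mul hε0.le]
  generalize √ε = t at *
  generalize √(1 - ε) = u at *
  -- weighted AM-GM, with weights making both bounds tight at `a = 1 - ε`, `b = ε`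
  have h₁ : 2 * (t * u) * √(a * b) ≤ t ^ 2 * a + u ^ 2 * b := by
    have := two_mul_le_add_sq (t * √a) (u * √b)
    rw [mul_pow, mul_pow, Real.sq_sqrt (x := a) (by linarith), Real.sq_sqrt hb] at this
    rw [Real.sqrt_mul (by linarith)]
    linarith
  have h₂ : 2 * (t * u) * √((1 - a) * (1 - b)) ≤ u ^ 2 * (1 - a) + t ^ 2 * (1 - b) := by
    have := two_mul_le_add_sq (u * √(1 - a)) (t * √(1 - b))
    rw [mul_pow, mul_pow, Real.sq_sqrt (x := 1 - a) (by linarith),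
      Real.sq_sqrt (x := 1 - b) (by linarith)] at this
    rw [Real.sqrt_mul (by linarith)]
    linarith
  have h₃ : t ^ 2 * a + u ^ 2 * b + (u ^ 2 * (1 - a) + t ^ 2 * (1 - b)) ≤
      2 * (t * u) * (2 * (t * u)) := by
    have : 2 * (t * u) * (2 * (t * u)) = 4 * t ^ 2 * u ^ 2 := by ring
    rw [this, ht2, hu2]
    nlinarith [mul_nonneg (by linarith : 0 ≤ a - b - (1 - 2 * ε)) (by linarith : 0 ≤ 1 - 2 * ε)]
  exact le_of_mul_le_mul_left (by linarith) htu

theorem star_dotProduct_self_eq_sum_norm_sq {ι : Type*} [Fintype ι] (v : ι → ℂ) :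
    star v ⬝ᵥ v = ((∑ i, ‖v i‖ ^ 2 : ℝ) : ℂ) := by
  simp [dotProduct, Complex.conj_mul']

namespace Matrix

theorem posSemidef_one_sub_add_of_posSemidef_one_sub_sum {𝕜 ι κ : Type*} [RCLike 𝕜]
    [DecidableEq ι] [DecidableEq κ] {M : κ → Matrix ι ι 𝕜} {C : Finset κ}
    (hM : ∀ x ∈ C, (M x).PosSemidef) (hMI : (1 - ∑ x ∈ C, M x).PosSemidef) {x y : κ}
    (hx : x ∈ C) (hy : y ∈ C) (hne : x ≠ y) : (1 - (M x + M y)).PosSemidef := by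
  open scoped MatrixOrder in
  rw [← le_iff, ← Finset.sum_pair hne]
  exact (Finset.sum_le_sum_of_subset_of_nonneg (by simp [Finset.insert_subset_iff, hx, hy])
    fun z hz _ => (hM z hz).nonneg).trans (le_iff.2 hMI)

variable {ι : Type*} [Fintype ι]

theorem PosSemidef.re_dotProduct_mulVec_le_sqrt {A : Matrix ι ι ℂ} (hA : A.PosSemidef)
    (u v : ι → ℂ) :
    (star u ⬝ᵥ (A *ᵥ v)).re ≤
      √((star u ⬝ᵥ (A *ᵥ u)).re * (star v ⬝ᵥ (A *ᵥ v)).re) := by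
  classical
  obtain ⟨B, rfl⟩ : ∃ B : Matrix ι ι ℂ, A = Bᴴ * B := by
    open scoped MatrixOrder in
    exact CStarAlgebra.nonneg_iff_eq_star_mul_self.mp hA.nonneg
  let toE (a : ι → ℂ) : EuclideanSpace ℂ ι := WithLp.toLp 2 (B *ᵥ a)
  have hinner (a b : ι → ℂ) : star a ⬝ᵥ ((Bᴴ * B) *ᵥ b) = inner ℂ (toE a) (toE b) := by
    rw [← mulVec_mulVec, dotProduct_mulVec, ← star_mulVec,
      EuclideanSpace.inner_eq_star_dotProduct, dotProduct_comm]
  calc (star u ⬝ᵥ ((Bᴴ * B) *ᵥ v)).re ≤ ‖toE u‖ * ‖toE v‖ := by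
        rw [hinner]; exact re_inner_le_norm (𝕜 := ℂ) _ _
    _ = _ := by
      rw [norm_eq_sqrt_re_inner (𝕜 := ℂ), norm_eq_sqrt_re_inner (𝕜 := ℂ),
        ← Real.sqrt_mul inner_self_nonneg, hinner, hinner]
      rfl

theorem PosSemidef.re_star_dotProduct_le_two_mul_sqrt [DecidableEq ι] {A : Matrix ι ι ℂ}
    (hA : A.PosSemidef) (hA1 : (1 - A).PosSemidef) {u v : ι → ℂ}
    (hu : star u ⬝ᵥ u = 1) (hv : star v ⬝ᵥ v = 1) {ε : ℝ} (hε : ε ≤ 1 / 2)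
    (hAu : 1 - ε ≤ (star u ⬝ᵥ (A *ᵥ u)).re) (hAv : (star v ⬝ᵥ (A *ᵥ v)).re ≤ ε) :
    (star u ⬝ᵥ v).re ≤ 2 * √(ε * (1 - ε)) := by
  have hsub (a b : ι → ℂ) :
      (star a ⬝ᵥ ((1 - A) *ᵥ b)).re = (star a ⬝ᵥ b).re - (star a ⬝ᵥ (A *ᵥ b)).re := by
    rw [sub_mulVec, one_mulVec, dotProduct_sub, Complex.sub_re]
  have hAu1 : (star u ⬝ᵥ (A *ᵥ u)).re ≤ 1 := by
    have : 0 ≤ (star u ⬝ᵥ ((1 - A) *ᵥ u)).re := hA1.re_dotProduct_nonneg u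
    rw [hsub, hu, Complex.one_re] at this
    linarith
  have hAv0 : 0 ≤ (star v ⬝ᵥ (A *ᵥ v)).re := hA.re_dotProduct_nonneg v
  have hA1uv := hA1.re_dotProduct_mulVec_le_sqrt u v
  rw [hsub u u, hsub v v, hu, hv, Complex.one_re] at hA1uv
  calc (star u ⬝ᵥ v).re
      = (star u ⬝ᵥ (A *ᵥ v)).re + (star u ⬝ᵥ ((1 - A) *ᵥ v)).re := by rw [hsub]; ring
    _ ≤ √((star u ⬝ᵥ (A *ᵥ u)).re * (star v ⬝ᵥ (A *ᵥ v)).re) +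
        √((1 - (star u ⬝ᵥ (A *ᵥ u)).re) * (1 - (star v ⬝ᵥ (A *ᵥ v)).re)) :=
      add_le_add (hA.re_dotProduct_mulVec_le_sqrt u v) hA1uv
    _ ≤ 2 * √(ε * (1 - ε)) := sqrt_mul_add_sqrt_one_sub_mul_one_sub_le hε hAu hAu1 hAv0 hAv

end Matrix

section Oracle

variable {n : ℕ}

theorem oracle1_mulVec_apply (x : Fin n → Bool) (ψ : Fin (n + 1) → ℂ) (i : Fin (n + 1)) :
    (oracle1 n x *ᵥ ψ) i = (if extendBit x i then -1 else 1) * ψ i :=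
  mulVec_diagonal _ _ _

theorem conjTranspose_oracle1 (x : Fin n → Bool) : (oracle1 n x)ᴴ = oracle1 n x := by
  rw [oracle1, diagonal_conjTranspose]
  congr 1
  funext i
  by_cases h : extendBit x i <;> simp [h]

theorem oracle1_mul_self (x : Fin n → Bool) : oracle1 n x * oracle1 n x = 1 := by
  rw [oracle1, diagonal_mul_diagonal, ← diagonal_one]
  congr 1
  funext i
  split_ifs <;> simp

theorem star_dotProduct_oracle1_mul_mul_oracle1_mulVec (x : Fin n → Bool)
    (A : Matrix (Fin (n + 1)) (Fin (n + 1)) ℂ) (ψ : Fin (n + 1) → ℂ) :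
    star ψ ⬝ᵥ ((oracle1 n x * A * oracle1 n x) *ᵥ ψ) =
      star (oracle1 n x *ᵥ ψ) ⬝ᵥ (A *ᵥ (oracle1 n x *ᵥ ψ)) := by
  rw [star_mulVec, conjTranspose_oracle1, ← dotProduct_mulVec, mulVec_mulVec, mulVec_mulVec,
    Matrix.mul_assoc]

theorem star_oracle1_mulVec_dotProduct_self (x : Fin n → Bool) (ψ : Fin (n + 1) → ℂ) :
    star (oracle1 n x *ᵥ ψ) ⬝ᵥ (oracle1 n x *ᵥ ψ) = star ψ ⬝ᵥ ψ := by
  simpa [oracle1_mul_self] using (star_dotProduct_oracle1_mul_mul_oracle1_mulVec x 1 ψ).symm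

theorem re_star_oracle1_mulVec_dotProduct_oracle1_mulVec (x y : Fin n → Bool)
    (ψ : Fin (n + 1) → ℂ) :
    (star (oracle1 n x *ᵥ ψ) ⬝ᵥ (oracle1 n y *ᵥ ψ)).re =
      ∑ i, ‖ψ i‖ ^ 2 - 2 * ∑ j with x j ≠ y j, ‖ψ j.succ‖ ^ 2 := by
  have hterm (b d : Bool) (z : ℂ) :
      (star ((if b then -1 else 1) * z) * ((if d then -1 else 1) * z)).re =
        ‖z‖ ^ 2 - 2 * if b ≠ d then ‖z‖ ^ 2 else 0 := by
    rw [Complex.sq_norm, Complex.normSq_apply]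
    cases b <;> cases d <;> simp <;> ring
  rw [dotProduct, Complex.re_sum]
  simp only [Pi.star_apply, oracle1_mulVec_apply, hterm]
  rw [Finset.sum_sub_distrib, ← Finset.mul_sum, Fin.sum_univ_succ (f := fun i => ite _ _ _),
    Finset.sum_filter]
  simp only [extendBit, Fin.cases_zero, Fin.cases_succ, ne_eq, not_true_eq_false, if_false,
    zero_add]
  rfl

end Oracle

theorem log_le_log_sub_of_le_one_sub_mul {x y c : ℝ} (hx : 0 < x) (hy : 0 < y)
    (h : y ≤ (1 - c) * x) : Real.log y ≤ Real.log x - c := by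
  have hc : 0 < 1 - c := pos_of_mul_pos_left (hy.trans_le h) hx.le
  calc Real.log y ≤ Real.log ((1 - c) * x) := Real.log_le_log hy h
    _ = Real.log (1 - c) + Real.log x := Real.log_mul hc.ne' hx.ne'
    _ ≤ Real.log x - c := by linarith [Real.log_le_sub_one_of_pos hc]

section FractionalCover

open Finset

variable {α ι : Type*} [Fintype ι] [DecidableEq ι] {D : α → Finset ι} {w : ι → ℝ} {c : ℝ}

theorem exists_card_filter_not_mem_le (hw0 : ∀ j, 0 ≤ w j) (hw1 : ∑ j, w j ≤ 1)
    (hc : 0 < c) {P : Finset α} (hP : P.Nonempty) (hPc : ∀ p ∈ P, c ≤ ∑ j ∈ D p, w j) :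
    ∃ j, (#{p ∈ P | j ∉ D p} : ℝ) ≤ (1 - c) * #P := by
  obtain ⟨p, hp⟩ := hP
  obtain ⟨j₀, -⟩ : (D p).Nonempty :=
    nonempty_of_sum_ne_zero (hc.trans_le (hPc p hp)).ne'
  obtain ⟨j, -, hj⟩ := exists_max_image univ (fun i => #{p ∈ P | i ∈ D p}) ⟨j₀, mem_univ _⟩
  refine ⟨j, ?_⟩
  have hsplit : (#{p ∈ P | j ∈ D p} : ℝ) + #{p ∈ P | j ∉ D p} = #P := by
    exact_mod_cast card_filter_add_card_filter_not _
  suffices c * #P ≤ #{p ∈ P | j ∈ D p} by linarith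
  calc c * #P = ∑ _p ∈ P, c := by rw [sum_const, nsmul_eq_mul, mul_comm]
    _ ≤ ∑ p ∈ P, ∑ i ∈ D p, w i := sum_le_sum hPc
    _ = ∑ i, w i * #{p ∈ P | i ∈ D p} := by
      rw [sum_comm' (t' := univ) (s' := fun i => {p ∈ P | i ∈ D p}) (by simp)]
      simp [mul_comm]
    _ ≤ ∑ i, w i * #{p ∈ P | j ∈ D p} :=
      sum_le_sum fun i _ => mul_le_mul_of_nonneg_left (by exact_mod_cast hj i (mem_univ i)) (hw0 i)
    _ = (∑ i, w i) * #{p ∈ P | j ∈ D p} := (sum_mul ..).symm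
    _ ≤ #{p ∈ P | j ∈ D p} := mul_le_of_le_one_left (Nat.cast_nonneg _) hw1

theorem exists_card_le_one_add_log_div_of_fractional_cover (hw0 : ∀ j, 0 ≤ w j)
    (hw1 : ∑ j, w j ≤ 1) (hc : 0 < c) (P : Finset α) (hPc : ∀ p ∈ P, c ≤ ∑ j ∈ D p, w j) :
    ∃ T : Finset ι, (∀ p ∈ P, ∃ j ∈ T, j ∈ D p) ∧ (#T : ℝ) ≤ 1 + Real.log #P / c := by
  induction P using Finset.strongInduction with
  | H P ih =>
  rcases P.eq_empty_or_nonempty with rfl | hP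
  · exact ⟨∅, by simp, by simp⟩
  obtain ⟨j, hQ⟩ := exists_card_filter_not_mem_le hw0 hw1 hc hP hPc
  have hlogP : 0 ≤ Real.log #P / c :=
    div_nonneg (Real.log_natCast_nonneg _) hc.le
  set Q := {p ∈ P | j ∉ D p}
  rcases Q.eq_empty_or_nonempty with hQ0 | hQne
  · exact ⟨{j}, fun p hp => ⟨j, mem_singleton_self j, not_not.1 (filter_eq_empty_iff.1 hQ0 hp)⟩,
      by simpa using hlogP⟩
  have hPpos : (0 : ℝ) < #P := by exact_mod_cast hP.card_pos
  have hQP : Q ⊂ P := by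
    refine ssubset_of_subset_of_ne (filter_subset _ _) fun h => ?_
    have : (#P : ℝ) ≤ (1 - c) * #P := h ▸ hQ
    nlinarith
  obtain ⟨T, hT, hTcard⟩ := ih Q hQP fun p hp => hPc p (mem_filter.1 hp).1
  refine ⟨insert j T, fun p hp => ?_, ?_⟩
  · by_cases hjp : j ∈ D p
    · exact ⟨j, mem_insert_self j T, hjp⟩
    · obtain ⟨i, hi, hip⟩ := hT p (mem_filter.2 ⟨hp, hjp⟩)
      exact ⟨i, mem_insert_of_mem hi, hip⟩
  have hlogQ : Real.log #Q ≤ Real.log #P - c :=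
    log_le_log_sub_of_le_one_sub_mul hPpos (by exact_mod_cast hQne.card_pos) hQ
  calc (#(insert j T) : ℝ) ≤ #T + 1 := by exact_mod_cast card_insert_le j T
    _ ≤ 1 + Real.log #Q / c + 1 := by linarith
    _ ≤ 1 + Real.log #P / c := by
      rw [add_assoc, add_le_add_iff_left, ← le_sub_iff_add_le, div_sub_one hc.ne']
      gcongr

end FractionalCover

theorem log_card_offDiag_le {α : Type*} [DecidableEq α] (s : Finset α) :
    Real.log s.offDiag.card ≤ 2 * Real.log s.card := by
  rcases Nat.eq_zero_or_pos s.offDiag.card with h | h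
  · rw [h, Nat.cast_zero, Real.log_zero]
    exact mul_nonneg two_pos.le (Real.log_natCast_nonneg _)
  calc Real.log s.offDiag.card ≤ Real.log ((s.card : ℝ) ^ 2) :=
        Real.log_le_log (by exact_mod_cast h)
          (by exact_mod_cast s.offDiag_card ▸ (Nat.sub_le _ _).trans (sq _).ge)
    _ = 2 * Real.log s.card := by rw [Real.log_pow, Nat.cast_ofNat]

theorem one_add_two_mul_log_div_le {c x : ℝ} (hc0 : 0 < c) (hc : c ≤ 1 / 2) (hx : 2 ≤ x) :
    1 + 2 * Real.log x / c ≤ 4 * Real.logb 2 x / (2 * c) := by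
  have hl2 : 0 < Real.log 2 := Real.log_pos one_lt_two
  have hlx : Real.log 2 ≤ Real.log x := Real.log_le_log two_pos hx
  have hl2' := Real.log_two_lt_d9
  have key : 4 * Real.logb 2 x / (2 * c) - (1 + 2 * Real.log x / c) =
      (2 * Real.log x * (1 - Real.log 2) - c * Real.log 2) / (c * Real.log 2) := by
    rw [Real.logb]; field_simp; ring
  rw [← sub_nonneg, key]
  apply div_nonneg _ (by positivity)
  nlinarith [mul_le_mul_of_nonneg_right hlx (by linarith : (0 : ℝ) ≤ 1 - Real.log 2)]

theorem one_sub_two_mul_sqrt_le_two_mul_sum_norm_sq {n : ℕ} {x y : Fin n → Bool}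
    {ψ : Fin (n + 1) → ℂ} (hψ : ∑ i, ‖ψ i‖ ^ 2 = 1)
    {A B : Matrix (Fin (n + 1)) (Fin (n + 1)) ℂ} (hA : A.PosSemidef) (hB : B.PosSemidef)
    (hAB : (1 - (A + B)).PosSemidef) {ε : ℝ} (hε : ε ≤ 1 / 2)
    (hAx : ((1 - ε : ℝ) : ℂ) ≤ star ψ ⬝ᵥ ((oracle1 n x * A * oracle1 n x) *ᵥ ψ))
    (hBy : ((1 - ε : ℝ) : ℂ) ≤ star ψ ⬝ᵥ ((oracle1 n y * B * oracle1 n y) *ᵥ ψ)) :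
    1 - 2 * √(ε * (1 - ε)) ≤ 2 * ∑ j with x j ≠ y j, ‖ψ j.succ‖ ^ 2 := by
  set u := oracle1 n x *ᵥ ψ
  set v := oracle1 n y *ᵥ ψ
  have hψ1 : star ψ ⬝ᵥ ψ = 1 := by
    rw [star_dotProduct_self_eq_sum_norm_sq, hψ, Complex.ofReal_one]
  have hu : star u ⬝ᵥ u = 1 := (star_oracle1_mulVec_dotProduct_self x ψ).trans hψ1
  have hv : star v ⬝ᵥ v = 1 := (star_oracle1_mulVec_dotProduct_self y ψ).trans hψ1
  have hA1 : (1 - A).PosSemidef := by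
    simpa only [sub_add_cancel, sub_add_eq_sub_sub] using hAB.add hB
  rw [star_dotProduct_oracle1_mul_mul_oracle1_mulVec] at hAx hBy
  have hAu : 1 - ε ≤ (star u ⬝ᵥ (A *ᵥ u)).re := by
    simpa only [Complex.ofReal_re] using (Complex.le_def.1 hAx).1
  have hAv : (star v ⬝ᵥ (A *ᵥ v)).re ≤ ε := by
    have hBv : 1 - ε ≤ (star v ⬝ᵥ (B *ᵥ v)).re := by
      simpa only [Complex.ofReal_re] using (Complex.le_def.1 hBy).1
    have hABv : 0 ≤ (star v ⬝ᵥ ((1 - (A + B)) *ᵥ v)).re := hAB.re_dotProduct_nonneg v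
    rw [sub_mulVec, add_mulVec, one_mulVec, dotProduct_sub, dotProduct_add, hv] at hABv
    simp only [Complex.sub_re, Complex.add_re, Complex.one_re] at hABv
    linarith
  have := hA.re_star_dotProduct_le_two_mul_sqrt hA1 hu hv hε hAu hAv
  rw [re_star_oracle1_mulVec_dotProduct_oracle1_mulVec, hψ] at this
  linarith

theorem one_query_quantum_learning_separating_set_general
    (n m : ℕ)
    (C : Finset (Fin n → Bool)) (hm : C.card = m) (hm2 : 2 ≤ m)
    (ε : ℝ) (hε1 : ε < 1 / 2)
    (ψ : Fin (n + 1) → ℂ) (hψ : ∑ i, ‖ψ i‖ ^ 2 = 1)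
    (M : (Fin n → Bool) → Matrix (Fin (n + 1)) (Fin (n + 1)) ℂ)
    (hM : ∀ x ∈ C, (M x).PosSemidef)
    (hMI : (1 - ∑ x ∈ C, M x).PosSemidef)
    (hsucc : ∀ x ∈ C,
      ((1 - ε : ℝ) : ℂ) ≤ star ψ ⬝ᵥ ((oracle1 n x * M x * oracle1 n x) *ᵥ ψ)) :
    ∃ S : Finset (Fin n),
      (S.card : ℝ) ≤ 4 * Real.logb 2 m / (1 - 2 * Real.sqrt (ε * (1 - ε))) ∧
      ∀ x ∈ C, ∀ y ∈ C, x ≠ y → ∃ j ∈ S, x j ≠ y j := by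
  classical
  set c := (1 - 2 * √(ε * (1 - ε))) / 2 with hc
  have hc0 : 0 < c := by linarith [sqrt_mul_one_sub_lt_half hε1.ne]
  have hsep : ∀ p ∈ C.offDiag, c ≤ ∑ j with p.1 j ≠ p.2 j, ‖ψ j.succ‖ ^ 2 := by
    rintro ⟨x, y⟩ hxy
    obtain ⟨hx, hy, hne⟩ : x ∈ C ∧ y ∈ C ∧ x ≠ y := Finset.mem_offDiag.1 hxy
    show c ≤ ∑ j with x j ≠ y j, ‖ψ j.succ‖ ^ 2
    linarith [one_sub_two_mul_sqrt_le_two_mul_sum_norm_sq hψ (hM x hx) (hM y hy)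
      (posSemidef_one_sub_add_of_posSemidef_one_sub_sum hM hMI hx hy hne) hε1.le
      (hsucc x hx) (hsucc y hy)]
  have hw1 : ∑ j : Fin n, ‖ψ j.succ‖ ^ 2 ≤ 1 := by
    rw [← hψ, Fin.sum_univ_succ]; linarith [sq_nonneg ‖ψ 0‖]
  obtain ⟨S, hS, hScard⟩ := exists_card_le_one_add_log_div_of_fractional_cover
    (fun _ => sq_nonneg _) hw1 hc0 C.offDiag hsep
  refine ⟨S, ?_, fun x hx y hy hxy => by
    simpa using hS (x, y) (Finset.mem_offDiag.2 ⟨hx, hy, hxy⟩)⟩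
  calc (S.card : ℝ) ≤ 1 + Real.log C.offDiag.card / c := hScard
    _ ≤ 1 + 2 * Real.log m / c := by gcongr; exact hm ▸ log_card_offDiag_le C
    _ ≤ 4 * Real.logb 2 m / (2 * c) :=
      one_add_two_mul_log_div_le hc0 (by linarith [Real.sqrt_nonneg (ε * (1 - ε))])
        (by exact_mod_cast hm2)
    _ = _ := by ring

/-- If a quantum algorithm `(ψ, (M_x)_{x∈C})` using one oracle query
learns a concept class `C` of size `m ≥ 2` with failure probability at most `ε < 1/2`,
then there is a set `S ⊆ [n]` with `|S| ≤ 4·log₂(m)/(1 − 2√(ε(1−ε)))` on which every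
pair of distinct concepts differs. -/
theorem one_query_quantum_learning_separating_set
    (n m : ℕ)
    (C : Finset (Fin n → Bool)) (hm : C.card = m) (hm2 : 2 ≤ m)
    (ε : ℝ) (hε0 : 0 ≤ ε) (hε1 : ε < 1 / 2)
    (ψ : Fin (n + 1) → ℂ) (hψ : ∑ i, ‖ψ i‖ ^ 2 = 1)
    (M : (Fin n → Bool) → Matrix (Fin (n + 1)) (Fin (n + 1)) ℂ)
    (hM : ∀ x ∈ C, (M x).PosSemidef)
    (hMI : (1 - ∑ x ∈ C, M x).PosSemidef)
    (hsucc : ∀ x ∈ C,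
      ((1 - ε : ℝ) : ℂ) ≤ star ψ ⬝ᵥ ((oracle1 n x * M x * oracle1 n x) *ᵥ ψ)) :
    ∃ S : Finset (Fin n),
      (S.card : ℝ) ≤ 4 * Real.logb 2 m / (1 - 2 * Real.sqrt (ε * (1 - ε))) ∧
      ∀ x ∈ C, ∀ y ∈ C, x ≠ y → ∃ j ∈ S, x j ≠ y j :=
  one_query_quantum_learning_separating_set_general n m C hm hm2 ε hε1 ψ hψ M hM hMI hsucc
end

section
/- Let C ⊆ {0,1}^n be a concept class with |C| = m ≥ 2, let 0 ≤ ε < 1/2, and let α₀, α₁, …, α_n be complex numbers with Σ_{i=0}^n |α_i|² = 1. Suppose that for all distinct x, y ∈ C (with the convention x₀ = y₀ = 0), (Σ_{i=0}^n |α_i|² (−1)^{x_i + y_i})² ≤ 4ε(1−ε). Then there exists a set S ⊆ [n] with |S| ≤ 4·log₂(m) / (1 − 2√(ε(1−ε))) such that every pair of distinct concepts in C differs on at least one index in S. -/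
/-- If the amplitudes `α₀,…,α_n` of a unit state satisfy the
near-orthogonality condition `(Σᵢ |αᵢ|²(−1)^{xᵢ+yᵢ})² ≤ 4ε(1−ε)` for every pair of
distinct concepts `x ≠ y` in a class `C` of size `m ≥ 2` (with `x₀ = y₀ = 0`), then
there is a set `S ⊆ [n]` with `|S| ≤ 4·log₂(m)/(1 − 2√(ε(1−ε)))` on which every pair
of distinct concepts differs. -/
theorem almost_orthogonal_amplitudes_separating_set
    (n m : ℕ)
    (C : Finset (Fin n → Bool)) (hm : C.card = m) (hm2 : 2 ≤ m)
    (ε : ℝ) (hε0 : 0 ≤ ε) (hε1 : ε < 1 / 2)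
    (α : Fin (n + 1) → ℂ) (hα : ∑ i, ‖α i‖ ^ 2 = 1)
    (horth : ∀ x ∈ C, ∀ y ∈ C, x ≠ y →
      (∑ i, ‖α i‖ ^ 2 * (if extendBit x i = extendBit y i then (1 : ℝ) else -1)) ^ 2
        ≤ 4 * ε * (1 - ε)) :
    ∃ S : Finset (Fin n),
      (S.card : ℝ) ≤ 4 * Real.logb 2 m / (1 - 2 * Real.sqrt (ε * (1 - ε))) ∧
      ∀ x ∈ C, ∀ y ∈ C, x ≠ y → ∃ j ∈ S, x j ≠ y j := by
  classical
  obtain ⟨s, hs_def⟩ : ∃ s : ℝ, s = Real.sqrt (ε * (1 - ε)) := ⟨_, rfl⟩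
  have hs0 : 0 ≤ s := hs_def ▸ Real.sqrt_nonneg _
  have hsq : s ^ 2 = ε * (1 - ε) := hs_def ▸ Real.sq_sqrt (by nlinarith)
  have hs_half : s < 1 / 2 := by
    nlinarith [hsq, sq_nonneg (1 / 2 - ε), sq_nonneg (s - 1 / 2)]
  obtain ⟨γ, hγ_def⟩ : ∃ γ : ℝ, γ = 1 / 2 - s := ⟨_, rfl⟩
  have hγ0 : 0 < γ := by rw [hγ_def]; linarith
  have hγ_half : γ ≤ 1 / 2 := by rw [hγ_def]; linarith
  have h1γ : 0 ≤ 1 - γ := by linarith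
  -- the weights on indices 1,…,n
  obtain ⟨β, hβ_def⟩ : ∃ β : Fin n → ℝ, β = fun j => ‖α j.succ‖ ^ 2 := ⟨_, rfl⟩
  have hβ0 : ∀ j, 0 ≤ β j := fun j => hβ_def ▸ sq_nonneg _
  have hαsum : ‖α 0‖ ^ 2 + ∑ j, β j = 1 := by
    rw [← hα, Fin.sum_univ_succ, hβ_def]
  have hβsum : ∑ j, β j ≤ 1 := by nlinarith [sq_nonneg ‖α 0‖]
  -- key per-pair bound: the weight of differing coordinates is at least γ
  have hpair : ∀ x ∈ C, ∀ y ∈ C, x ≠ y →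
      γ ≤ ∑ j ∈ Finset.univ.filter (fun j => x j ≠ y j), β j := by
    intro x hx y hy hxy
    have hT := horth x hx y hy hxy
    have hTval : (∑ i, ‖α i‖ ^ 2 * (if extendBit x i = extendBit y i then (1 : ℝ) else -1))
        = 1 - 2 * ∑ j ∈ Finset.univ.filter (fun j => x j ≠ y j), β j := by
      rw [Fin.sum_univ_succ]
      have h0 : extendBit x 0 = extendBit y 0 := by simp [extendBit]
      rw [if_pos h0, mul_one]
      have hsucc : ∀ j : Fin n,
          ‖α j.succ‖ ^ 2 * (if extendBit x j.succ = extendBit y j.succ then (1:ℝ) else -1)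
          = β j - 2 * (if x j ≠ y j then β j else 0) := by
        intro j
        simp only [extendBit, Fin.cases_succ, hβ_def]
        by_cases h : x j = y j <;> simp [h] <;> ring
      rw [Finset.sum_congr rfl fun j _ => hsucc j, Finset.sum_sub_distrib,
        ← Finset.mul_sum, ← Finset.sum_filter]
      linarith [hαsum]
    rw [hTval] at hT
    have h2s : 4 * ε * (1 - ε) = (2 * s) ^ 2 := by nlinarith [hsq]
    rw [h2s] at hT
    have h3 : 1 - 2 * (∑ j ∈ Finset.univ.filter (fun j => x j ≠ y j), β j) ≤ 2 * s := by
      nlinarith [sq_nonneg (1 - 2 * (∑ j ∈ Finset.univ.filter (fun j => x j ≠ y j), β j) - 2 * s),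
        sq_nonneg (1 - 2 * (∑ j ∈ Finset.univ.filter (fun j => x j ≠ y j), β j) + 2 * s)]
    rw [hγ_def]; linarith
  -- unseparated pairs
  obtain ⟨U, hU_def⟩ : ∃ U : Finset (Fin n) → Finset ((Fin n → Bool) × (Fin n → Bool)),
      U = fun S => (C ×ˢ C).filter (fun p => p.1 ≠ p.2 ∧ ∀ j ∈ S, p.1 j = p.2 j) := ⟨_, rfl⟩
  -- greedy induction
  have key : ∀ k : ℕ, ∃ S : Finset (Fin n), S.card ≤ k ∧
      ((U S).card : ℝ) ≤ (m : ℝ) ^ 2 * (1 - γ) ^ k := by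
    intro k
    induction k with
    | zero =>
      refine ⟨∅, le_refl 0, ?_⟩
      simp only [pow_zero, mul_one]
      calc ((U ∅).card : ℝ) ≤ ((C ×ˢ C).card : ℝ) := by
            rw [hU_def]
            exact_mod_cast Finset.card_le_card (Finset.filter_subset _ _)
        _ = (m : ℝ) ^ 2 := by rw [Finset.card_product, hm]; push_cast; ring
    | succ k ih =>
      obtain ⟨S, hScard, hSbound⟩ := ih
      by_cases hUe : U S = ∅
      · refine ⟨S, hScard.trans (Nat.le_succ k), ?_⟩
        rw [hUe]
        simp only [Finset.card_empty, Nat.cast_zero]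
        positivity
      · have hUne : (U S).Nonempty := Finset.nonempty_of_ne_empty hUe
        have hUpos : (0 : ℝ) < (U S).card := by
          exact_mod_cast Finset.card_pos.mpr hUne
        -- double counting
        obtain ⟨d, hd_def⟩ : ∃ d : Fin n → ℕ,
            d = fun j => ((U S).filter (fun p => p.1 j ≠ p.2 j)).card := ⟨_, rfl⟩
        have hmemU : ∀ p ∈ U S, p.1 ∈ C ∧ p.2 ∈ C ∧ p.1 ≠ p.2 := by
          intro p hp
          rw [hU_def, Finset.mem_filter, Finset.mem_product] at hp
          exact ⟨hp.1.1, hp.1.2, hp.2.1⟩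
        have hdsum : γ * (U S).card ≤ ∑ j, β j * (d j : ℝ) := by
          have h1 : γ * (U S).card ≤
              ∑ p ∈ U S, ∑ j ∈ Finset.univ.filter (fun j => p.1 j ≠ p.2 j), β j := by
            have : γ * ((U S).card : ℝ) = ∑ _p ∈ U S, γ := by
              rw [Finset.sum_const, nsmul_eq_mul, mul_comm]
            rw [this]
            refine Finset.sum_le_sum fun p hp => ?_
            obtain ⟨ha, hb, hc⟩ := hmemU p hp
            exact hpair p.1 ha p.2 hb hc
          have h2 : ∑ p ∈ U S, ∑ j ∈ Finset.univ.filter (fun j => p.1 j ≠ p.2 j), β j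
              = ∑ j, β j * (d j : ℝ) := by
            have hstep : ∀ p ∈ U S, ∑ j ∈ Finset.univ.filter (fun j => p.1 j ≠ p.2 j), β j
                = ∑ j : Fin n, if p.1 j ≠ p.2 j then β j else 0 :=
              fun p _ => Finset.sum_filter _ _
            rw [Finset.sum_congr rfl hstep, Finset.sum_comm]
            refine Finset.sum_congr rfl fun j _ => ?_
            have : (∑ p ∈ U S, if p.1 j ≠ p.2 j then β j else 0)
                = ∑ p ∈ (U S).filter (fun p => p.1 j ≠ p.2 j), β j :=
              (Finset.sum_filter _ _).symm
            rw [this, Finset.sum_const, nsmul_eq_mul, hd_def, mul_comm]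
          linarith [h1, h2.le, h2.ge]
        -- there is a coordinate separating many pairs
        have hex : ∃ j₀ : Fin n, γ * (U S).card ≤ (d j₀ : ℝ) := by
          by_contra hcon
          push_neg at hcon
          have hpos : 0 < ∑ j, β j * (d j : ℝ) := lt_of_lt_of_le (by positivity) hdsum
          have hex1 : ∃ j₁ : Fin n, 0 < β j₁ * (d j₁ : ℝ) := by
            by_contra hc
            push_neg at hc
            have : ∑ j, β j * (d j : ℝ) ≤ 0 := Finset.sum_nonpos fun j _ => hc j
            linarith
          obtain ⟨j₁, hj₁⟩ := hex1
          have hβj₁ : 0 < β j₁ := by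
            rcases lt_or_eq_of_le (hβ0 j₁) with h | h
            · exact h
            · exfalso; rw [← h] at hj₁; simp at hj₁
          have hlt : ∑ j, β j * (d j : ℝ) < ∑ j, β j * (γ * (U S).card) := by
            refine Finset.sum_lt_sum (fun j _ => ?_) ⟨j₁, Finset.mem_univ j₁, ?_⟩
            · exact mul_le_mul_of_nonneg_left (hcon j).le (hβ0 j)
            · exact mul_lt_mul_of_pos_left (hcon j₁) hβj₁
          rw [← Finset.sum_mul] at hlt
          have hfin : ∑ j, β j * (d j : ℝ) < γ * (U S).card := by
            calc ∑ j, β j * (d j : ℝ) < (∑ j, β j) * (γ * (U S).card) := hlt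
              _ ≤ 1 * (γ * (U S).card) :=
                  mul_le_mul_of_nonneg_right hβsum (by positivity)
              _ = γ * (U S).card := one_mul _
          linarith
        obtain ⟨j₀, hj₀⟩ := hex
        refine ⟨insert j₀ S, ?_, ?_⟩
        · calc (insert j₀ S).card ≤ S.card + 1 := Finset.card_insert_le _ _
            _ ≤ k + 1 := by omega
        · have hU' : U (insert j₀ S) = (U S).filter (fun p => ¬ p.1 j₀ ≠ p.2 j₀) := by
            rw [hU_def]
            ext p
            simp only [Finset.mem_filter, Finset.mem_insert, ne_eq, not_not]
            constructor
            · rintro ⟨hp, hne, hall⟩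
              exact ⟨⟨hp, hne, fun j hj => hall j (Or.inr hj)⟩, hall j₀ (Or.inl rfl)⟩
            · rintro ⟨⟨hp, hne, hall⟩, hj0⟩
              refine ⟨hp, hne, fun j hj => ?_⟩
              rcases hj with rfl | hj
              · exact hj0
              · exact hall j hj
          have hsplit : ((U S).filter (fun p => p.1 j₀ ≠ p.2 j₀)).card
              + ((U S).filter (fun p => ¬ p.1 j₀ ≠ p.2 j₀)).card = (U S).card :=
            Finset.card_filter_add_card_filter_not _
          have hcard' : ((U (insert j₀ S)).card : ℝ) = (U S).card - d j₀ := by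
            rw [hU', hd_def]
            push_cast [← hsplit]
            ring
          rw [hcard']
          have hdj : (d j₀ : ℝ) ≥ γ * (U S).card := hj₀
          calc ((U S).card : ℝ) - d j₀ ≤ (U S).card - γ * (U S).card := by linarith
            _ = (1 - γ) * (U S).card := by ring
            _ ≤ (1 - γ) * ((m : ℝ) ^ 2 * (1 - γ) ^ k) :=
                mul_le_mul_of_nonneg_left hSbound h1γ
            _ = (m : ℝ) ^ 2 * (1 - γ) ^ (k + 1) := by ring
  -- choose the number of steps
  have hm1 : (1 : ℝ) < (m : ℝ) := by exact_mod_cast lt_of_lt_of_le one_lt_two hm2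
  have hlogm : 0 < Real.log m := Real.log_pos hm1
  have hlog2m : Real.log 2 ≤ Real.log m := by
    apply Real.log_le_log (by norm_num)
    exact_mod_cast hm2
  obtain ⟨t, ht_def⟩ : ∃ t : ℕ, t = ⌊2 * Real.log m / γ⌋₊ + 1 := ⟨_, rfl⟩
  obtain ⟨S, hScard, hSbound⟩ := key t
  -- the unseparated set is empty
  have htγ : 2 * Real.log m < γ * t := by
    have h := Nat.lt_floor_add_one (2 * Real.log m / γ)
    rw [div_lt_iff₀ hγ0] at h
    calc 2 * Real.log m < ((⌊2 * Real.log m / γ⌋₊ : ℝ) + 1) * γ := h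
      _ = γ * t := by rw [ht_def]; push_cast; ring
  have hexp : (1 - γ) ^ t ≤ Real.exp (-γ * t) := by
    have h1 : 1 - γ ≤ Real.exp (-γ) := by
      have := Real.add_one_le_exp (-γ)
      linarith
    calc (1 - γ) ^ t ≤ Real.exp (-γ) ^ t := pow_le_pow_left₀ h1γ h1 t
      _ = Real.exp (-γ * t) := by rw [← Real.exp_nat_mul]; ring_nf
  have hlt1 : (m : ℝ) ^ 2 * (1 - γ) ^ t < 1 := by
    have hmexp : (m : ℝ) ^ 2 = Real.exp (2 * Real.log m) := by
      rw [two_mul, Real.exp_add, Real.exp_log (by linarith)]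
      ring
    calc (m : ℝ) ^ 2 * (1 - γ) ^ t ≤ (m : ℝ) ^ 2 * Real.exp (-γ * t) :=
          mul_le_mul_of_nonneg_left hexp (by positivity)
      _ = Real.exp (2 * Real.log m + -γ * t) := by rw [hmexp, ← Real.exp_add]
      _ < Real.exp 0 := Real.exp_lt_exp.mpr (by linarith)
      _ = 1 := Real.exp_zero
  have hUempty : U S = ∅ := by
    by_contra hne
    have : (1 : ℝ) ≤ (U S).card := by
      exact_mod_cast Finset.card_pos.mpr (Finset.nonempty_of_ne_empty hne)
    linarith
  refine ⟨S, ?_, ?_⟩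
  · -- cardinality bound
    have hden : 1 - 2 * Real.sqrt (ε * (1 - ε)) = 2 * γ := by
      rw [hγ_def, hs_def]; ring
    rw [hden]
    have htle : (t : ℝ) ≤ 2 * Real.log m / γ + 1 := by
      rw [ht_def]
      push_cast
      have := Nat.floor_le (show 0 ≤ 2 * Real.log m / γ by positivity)
      linarith
    rw [Real.logb, le_div_iff₀ (by positivity)]
    have hγsc : γ * (2 * Real.log m / γ) = 2 * Real.log m := by
      field_simp
    have hlog2_lt : Real.log 2 < 0.6931471808 := Real.log_two_lt_d9
    have hlog2_pos : 0 < Real.log 2 := Real.log_pos one_lt_two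
    have h1 : (t : ℝ) * (2 * γ) ≤ 4 * Real.log m + 2 * γ := by
      have h := mul_le_mul_of_nonneg_left htle hγ0.le
      rw [mul_add, hγsc, mul_one] at h
      have hrw : (t : ℝ) * (2 * γ) = 2 * (γ * (t : ℝ)) := by ring
      rw [hrw]
      linarith
    have h2 : 4 * Real.log m + 2 * γ ≤ 4 * (Real.log m / Real.log 2) := by
      rw [← mul_div_assoc, le_div_iff₀ hlog2_pos]
      have hlog2_lt34 : Real.log 2 < 3 / 4 := lt_trans hlog2_lt (by norm_num)
      have hprod : 0 ≤ (Real.log m - Real.log 2) * (1 - Real.log 2) :=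
        mul_nonneg (by linarith) (by linarith)
      have hγl : 2 * γ * Real.log 2 ≤ 1 * Real.log 2 :=
        mul_le_mul_of_nonneg_right (by linarith) hlog2_pos.le
      have hll : Real.log 2 * Real.log 2 < 3 / 4 * Real.log 2 :=
        mul_lt_mul_of_pos_right hlog2_lt34 hlog2_pos
      linarith [hprod, hγl, hll, mul_pos hlog2_pos hlog2_pos]
    calc ((S.card : ℝ)) * (2 * γ) ≤ (t : ℝ) * (2 * γ) := by
          apply mul_le_mul_of_nonneg_right _ (by positivity)
          exact_mod_cast hScard
      _ ≤ 4 * (Real.log m / Real.log 2) := le_trans h1 h2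
      _ = 4 * (Real.log m / Real.log 2) := rfl
  · -- separating property
    intro x hx y hy hxy
    by_contra hcon
    push_neg at hcon
    have hmem : (x, y) ∈ U S := by
      rw [hU_def, Finset.mem_filter, Finset.mem_product]
      refine ⟨⟨hx, hy⟩, hxy, fun j hj => ?_⟩
      by_contra h
      exact absurd h (not_not.mpr (hcon j hj))
    rw [hUempty] at hmem
    exact absurd hmem (Finset.notMem_empty _)
end

section
/- Let C ⊆ {0,1}^n be a concept class and k ≥ 1. For x ∈ C, define x^{⊗k} ∈ {0,1}^{(n+1)^k}, indexed by tuples (i_1,…,i_k) with 0 ≤ i_m ≤ n, by x^{⊗k}_{i_1,…,i_k} = x_{i_1} ⊕ ⋯ ⊕ x_{i_k} with the convention x₀ = 0, and let C^{⊗k} = { x^{⊗k} : x ∈ C }. If there exists a set S′ of q tuples (i_1,…,i_k) (0 ≤ i_m ≤ n) such that every pair of distinct elements of C^{⊗k} differs on at least one tuple in S′, then there exists a set S ⊆ [n] with |S| ≤ kq such that every pair of distinct concepts in C differs on at least one index in S. -/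
/-- The string `x^{⊗k} ∈ {0,1}^{(n+1)^k}`, indexed by tuples `(i₁,…,i_k)` with
`0 ≤ i_m ≤ n`, defined by `x^{⊗k}_{i₁,…,i_k} = x_{i₁} ⊕ ⋯ ⊕ x_{i_k}` (with `x₀ = 0`),
i.e. the parity of the number of positions `m` with `x_{i_m} = 1`. -/
noncomputable def tensPow (n k : ℕ) (x : Fin n → Bool) (i : Fin k → Fin (n + 1)) : Bool :=
  decide (Odd (Finset.univ.filter fun m : Fin k => extendBit x (i m) = true).card)

/-!
A tensor-power coordinate `x^{⊗k}_t` only reads the base coordinates `x_j` with `j + 1`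
among the entries of `t`, of which there are at most `k`; so the base indices read by a
separating set of `q` tuples form a set of at most `kq` indices on which any two concepts
with distinct tensor powers differ. For `k ≥ 1` distinct concepts do have distinct tensor
powers, since the tuple `(j + 1, 0, …, 0)` reads off `x_j`.
-/

open Finset

variable {n k : ℕ}

@[simp]
lemma extendBit_zero (x : Fin n → Bool) : extendBit x 0 = false := rfl

@[simp]
lemma extendBit_succ (x : Fin n → Bool) (j : Fin n) : extendBit x j.succ = x j := rfl

lemma tensPow_single (x : Fin n → Bool) (m : Fin k) (j : Fin n) :
    tensPow n k x (Pi.single m j.succ) = x j := by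
  have hfilter : (univ.filter fun m' => extendBit x ((Pi.single m j.succ : Fin k → Fin (n + 1)) m') = true)
      = univ.filter fun m' => m' = m ∧ x j = true := by
    ext m'
    by_cases hm : m' = m <;> simp [hm]
  cases hx : x j <;> simp [tensPow, hfilter, hx, filter_eq']

lemma tensPow_injective (hk : 0 < k) : Function.Injective (tensPow n k) := by
  intro x y hxy
  funext j
  rw [← tensPow_single x ⟨0, hk⟩ j, ← tensPow_single y ⟨0, hk⟩ j, hxy]

lemma tensPow_apply_congr {x y : Fin n → Bool} {t : Fin k → Fin (n + 1)}
    (h : ∀ m, extendBit x (t m) = extendBit y (t m)) : tensPow n k x t = tensPow n k y t := by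
  simp only [tensPow, h]

def readIndices (t : Fin k → Fin (n + 1)) : Finset (Fin n) :=
  univ.filter fun j => ∃ m, t m = j.succ

lemma card_readIndices_le (t : Fin k → Fin (n + 1)) : (readIndices t).card ≤ k :=
  calc (readIndices t).card
      ≤ (univ.image t).card := by
        refine card_le_card_of_injOn Fin.succ (fun j hj => ?_) (Fin.succ_injective n).injOn
        obtain ⟨m, hm⟩ := (mem_filter.1 hj).2
        exact mem_image.2 ⟨m, mem_univ m, hm⟩
    _ ≤ k := card_image_le.trans_eq (card_fin k)

lemma exists_mem_readIndices_ne_of_tensPow_ne {x y : Fin n → Bool} {t : Fin k → Fin (n + 1)}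
    (h : tensPow n k x t ≠ tensPow n k y t) : ∃ j ∈ readIndices t, x j ≠ y j := by
  obtain ⟨m, hm⟩ : ∃ m, extendBit x (t m) ≠ extendBit y (t m) := by
    by_contra! hall
    exact h (tensPow_apply_congr hall)
  induction hj : t m using Fin.cases with
  | zero => simp [hj] at hm
  | succ j =>
    rw [hj] at hm
    exact ⟨j, mem_filter.2 ⟨mem_univ j, m, hj⟩, by simpa using hm⟩

/-- If a set `S'` of `q` tuples separates the concept class
`C^{⊗k} = {x^{⊗k} : x ∈ C}`, then there is a set `S ⊆ [n]` of at most `kq` indices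
separating `C`. -/
theorem tensor_power_separating_set_to_base
    (n k q : ℕ) (hk : 1 ≤ k)
    (C : Finset (Fin n → Bool))
    (S' : Finset (Fin k → Fin (n + 1))) (hS' : S'.card = q)
    (hsep : ∀ x ∈ C, ∀ y ∈ C, tensPow n k x ≠ tensPow n k y →
      ∃ t ∈ S', tensPow n k x t ≠ tensPow n k y t) :
    ∃ S : Finset (Fin n), S.card ≤ k * q ∧
      ∀ x ∈ C, ∀ y ∈ C, x ≠ y → ∃ j ∈ S, x j ≠ y j := by
  refine ⟨S'.biUnion readIndices, ?_, fun x hx y hy hxy => ?_⟩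
  · rw [mul_comm, ← hS']
    exact card_biUnion_le_card_mul S' readIndices k fun t _ => card_readIndices_le t
  · obtain ⟨t, ht, hne⟩ := hsep x hx y hy ((tensPow_injective hk).ne hxy)
    obtain ⟨j, hj, hxyj⟩ := exists_mem_readIndices_ne_of_tensPow_ne hne
    exact ⟨j, mem_biUnion.2 ⟨t, ht, hj⟩, hxyj⟩
end
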